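/- arXiv:2109.11307 — 4 statements merged into one kernel-verified Lean document; each statement's English description precedes it below -/
import Mathlib

section
/- Let A be a Pickands dependence function, twice differentiable on (0,1), satisfying A(t) > 1 - t for all t ∈ (0, 1/2]. Then the map t ↦ x(t) := t + A(t) - 1 is a strictly increasing bijection of [0,1], and the function W defined by W(x(t)) = A(t) - t is non-increasing and convex on [0,1] with W(0) = 1 and W(1) = 0. -/
def IsPickands (A : ℝ → ℝ) : Prop :=
  (∀ t ∈ Set.Icc (0:ℝ) 1, max t (1 - t) ≤ A t ∧ A t ≤ 1) ∧
  ConvexOn ℝ (Set.Icc (0:ℝ) 1) A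

/-- the inverse transform of a Pickands function A with A(t) > 1 - t on
(0, 1/2] yields a strictly increasing bijection x(t) = t + A t - 1 of [0,1] and a
non-increasing convex W on [0,1] with W(0)=1 and W(1)=0. -/
theorem stmt6 (A W : ℝ → ℝ) (hA : IsPickands A)
    (hdiff : ∀ t ∈ Set.Ioo (0:ℝ) 1, DifferentiableAt ℝ A t)
    (hdiff2 : ∀ t ∈ Set.Ioo (0:ℝ) 1, DifferentiableAt ℝ (deriv A) t)
    (hgt : ∀ t ∈ Set.Ioc (0:ℝ) (1/2), 1 - t < A t)
    (hrel : ∀ t ∈ Set.Icc (0:ℝ) 1, W (t + A t - 1) = A t - t) :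
    StrictMonoOn (fun t => t + A t - 1) (Set.Icc (0:ℝ) 1) ∧
    Set.BijOn (fun t => t + A t - 1) (Set.Icc (0:ℝ) 1) (Set.Icc (0:ℝ) 1) ∧
    AntitoneOn W (Set.Icc (0:ℝ) 1) ∧
    ConvexOn ℝ (Set.Icc (0:ℝ) 1) W ∧
    W 0 = 1 ∧ W 1 = 0 := by
  obtain ⟨hb, hconv⟩ := hA
  have h01 : (0:ℝ) ∈ Set.Icc (0:ℝ) 1 := by norm_num
  have h11 : (1:ℝ) ∈ Set.Icc (0:ℝ) 1 := by norm_num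
  have A0 : A 0 = 1 := by
    have h := hb 0 h01
    have h1 : (1:ℝ) ≤ A 0 := le_trans (by norm_num) h.1
    linarith [h.2]
  have A1 : A 1 = 1 := by
    have h := hb 1 h11
    have h1 : (1:ℝ) ≤ A 1 := le_trans (by norm_num) h.1
    linarith [h.2]
  -- lower bounds
  have hlbt : ∀ t ∈ Set.Icc (0:ℝ) 1, t ≤ A t := fun t ht =>
    le_trans (le_max_left _ _) (hb t ht).1
  have hlb1t : ∀ t ∈ Set.Icc (0:ℝ) 1, 1 - t ≤ A t := fun t ht =>
    le_trans (le_max_right _ _) (hb t ht).1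
  have hkey : ∀ t ∈ Set.Ioc (0:ℝ) 1, 1 - t < A t := by
    intro t ht
    by_cases h : t ≤ 1/2
    · exact hgt t ⟨ht.1, h⟩
    · have := hlbt t ⟨le_of_lt ht.1, ht.2⟩
      linarith
  -- strict monotonicity
  have hx : StrictMonoOn (fun t => t + A t - 1) (Set.Icc (0:ℝ) 1) := by
    intro s hs t ht hst
    simp only
    have ht0 : 0 < t := lt_of_le_of_lt hs.1 hst
    rcases eq_or_lt_of_le hs.1 with h0 | h0
    · rw [← h0, A0]
      have := hkey t ⟨ht0, ht.2⟩
      linarith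
    · have hAs : 1 - s < A s := hkey s ⟨h0, hs.2⟩
      have hsl := hconv.slope_mono_adjacent h01 ht h0 hst
      rw [A0] at hsl
      have h1 : (-1:ℝ) < (A s - 1) / (s - 0) := by
        rw [lt_div_iff₀ (by linarith)]
        linarith
      have h2 : (-1:ℝ) < (A t - A s) / (t - s) := lt_of_lt_of_le h1 hsl
      rw [lt_div_iff₀ (by linarith)] at h2
      linarith
  -- "W decreasing" in parametrized form
  have hdec : ∀ s ∈ Set.Icc (0:ℝ) 1, ∀ t ∈ Set.Icc (0:ℝ) 1, s ≤ t →
      A t - t ≤ A s - s := by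
    intro s hs t ht hst
    rcases eq_or_lt_of_le hst with h | h
    · rw [h]
    rcases eq_or_lt_of_le ht.2 with h1 | h1
    · rw [h1, A1]
      have := hlbt s hs
      linarith
    · have hsl := hconv.slope_mono_adjacent hs h11 h h1
      rw [A1] at hsl
      have hub : (1 - A t) / (1 - t) ≤ 1 := by
        rw [div_le_one (by linarith)]
        have := hlbt t ht
        linarith
      have h2 : (A t - A s) / (t - s) ≤ 1 := le_trans hsl hub
      rw [div_le_one (by linarith)] at h2
      linarith
  -- continuity of A on [0,1]
  have hcont : ContinuousOn A (Set.Icc (0:ℝ) 1) := by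
    intro t ht
    rcases eq_or_lt_of_le ht.1 with h0 | h0
    · rw [← h0]
      show Filter.Tendsto A _ _
      rw [A0]
      apply tendsto_of_tendsto_of_tendsto_of_le_of_le'
        (g := fun s : ℝ => 1 - s) (h := fun _ : ℝ => (1:ℝ))
      · have hc : Continuous (fun s : ℝ => 1 - s) := by continuity
        have h1 : Filter.Tendsto (fun s : ℝ => 1 - s) (nhds (0:ℝ)) (nhds 1) := by
          simpa using hc.tendsto (0:ℝ)
        exact h1.mono_left nhdsWithin_le_nhds
      · exact tendsto_const_nhds
      · filter_upwards [self_mem_nhdsWithin] with s hs using hlb1t s hs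
      · filter_upwards [self_mem_nhdsWithin] with s hs using (hb s hs).2
    rcases eq_or_lt_of_le ht.2 with h1 | h1
    · rw [h1]
      show Filter.Tendsto A _ _
      rw [A1]
      apply tendsto_of_tendsto_of_tendsto_of_le_of_le'
        (g := fun s : ℝ => s) (h := fun _ : ℝ => (1:ℝ))
      · exact continuous_id.tendsto (1:ℝ) |>.mono_left nhdsWithin_le_nhds
      · exact tendsto_const_nhds
      · filter_upwards [self_mem_nhdsWithin] with s hs using hlbt s hs
      · filter_upwards [self_mem_nhdsWithin] with s hs using (hb s hs).2
    · exact ((hdiff t ⟨h0, h1⟩).continuousAt).continuousWithinAt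
  have hxcont : ContinuousOn (fun t => t + A t - 1) (Set.Icc (0:ℝ) 1) :=
    (continuousOn_id.add hcont).sub continuousOn_const
  have hx0 : (fun t => t + A t - 1) 0 = 0 := by simp [A0]
  have hx1 : (fun t => t + A t - 1) 1 = 1 := by simp [A1]
  -- maps to
  have hmaps : Set.MapsTo (fun t => t + A t - 1) (Set.Icc (0:ℝ) 1) (Set.Icc (0:ℝ) 1) := by
    intro t ht
    have hmono := hx.monotoneOn
    constructor
    · have := hmono h01 ht ht.1
      rw [hx0] at this
      exact this
    · have := hmono ht h11 ht.2
      rw [hx1] at this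
      exact this
  -- surjectivity
  have hsurj : Set.SurjOn (fun t => t + A t - 1) (Set.Icc (0:ℝ) 1) (Set.Icc (0:ℝ) 1) := by
    have := intermediate_value_Icc (by norm_num : (0:ℝ) ≤ 1) hxcont
    rw [A0, A1] at this
    norm_num at this
    exact this
  have hbij : Set.BijOn (fun t => t + A t - 1) (Set.Icc (0:ℝ) 1) (Set.Icc (0:ℝ) 1) :=
    ⟨hmaps, hx.injOn, hsurj⟩
  -- antitone W
  have hanti : AntitoneOn W (Set.Icc (0:ℝ) 1) := by
    intro x₁ hx₁ x₂ hx₂ h12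
    obtain ⟨t₁, ht₁, he₁⟩ := hsurj hx₁
    obtain ⟨t₂, ht₂, he₂⟩ := hsurj hx₂
    simp only at he₁ he₂
    have hts : t₁ ≤ t₂ := by
      by_contra hc
      push_neg at hc
      have := hx ht₂ ht₁ hc
      simp only at this
      rw [he₁, he₂] at this
      linarith
    rw [← he₁, ← he₂, hrel t₁ ht₁, hrel t₂ ht₂]
    exact hdec t₁ ht₁ t₂ ht₂ hts
  refine ⟨hx, hbij, hanti, ?_, ?_, ?_⟩
  · -- convexity of W
    refine ⟨convex_Icc 0 1, ?_⟩
    intro x₁ hx₁ x₂ hx₂ a b ha hb' hab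
    obtain ⟨t₁, ht₁, he₁⟩ := hsurj hx₁
    obtain ⟨t₂, ht₂, he₂⟩ := hsurj hx₂
    simp only at he₁ he₂
    set t := a * t₁ + b * t₂ with htdef
    have htmem : t ∈ Set.Icc (0:ℝ) 1 := (convex_Icc 0 1) ht₁ ht₂ ha hb' hab
    have hAconv : A t ≤ a * A t₁ + b * A t₂ := hconv.2 ht₁ ht₂ ha hb' hab
    have hxeq : a • x₁ + b • x₂ = t + (a * A t₁ + b * A t₂) - 1 := by
      simp only [smul_eq_mul]
      rw [← he₁, ← he₂]
      ring_nf
      nlinarith [hab]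
    have hxt : t + A t - 1 ≤ a • x₁ + b • x₂ := by
      rw [hxeq]; linarith
    have hmem2 : a • x₁ + b • x₂ ∈ Set.Icc (0:ℝ) 1 :=
      (convex_Icc 0 1) hx₁ hx₂ ha hb' hab
    have hWle : W (a • x₁ + b • x₂) ≤ W (t + A t - 1) :=
      hanti (hmaps htmem) hmem2 hxt
    rw [hrel t htmem] at hWle
    have hw1 : W x₁ = A t₁ - t₁ := by rw [← he₁]; exact hrel t₁ ht₁
    have hw2 : W x₂ = A t₂ - t₂ := by rw [← he₂]; exact hrel t₂ ht₂
    rw [hw1, hw2]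
    simp only [smul_eq_mul] at hWle ⊢
    nlinarith [hWle, hAconv, htdef]
  · have := hrel 0 h01
    rw [A0] at this
    simpa using this
  · have := hrel 1 h11
    rw [A1] at this
    simpa using this
end

section
/- Let A be a symmetric Pickands dependence function (A(t) = A(1-t) for all t) with A(t) > 1-t on (0,1/2], and let W be defined via x(t) = t + A(t) - 1, W(x(t)) = A(t) - t. Then W is invertible on [0,1] and is an involution: W(W(x)) = x for all x ∈ [0,1]. -/
/-
Write `x(t) = t + A t - 1`, so that the hypothesis on `W` reads `W (x t) = A t - t`. Symmetry of
`A` gives `A t - t = x (1 - t)`, i.e. `W ∘ x = x ∘ (t ↦ 1 - t)` on `[0,1]`. The bounds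
`max t (1 - t) ≤ A t ≤ 1` force `A 0 = A 1 = 1` and squeeze `A` continuously at the endpoints,
while convexity makes it continuous inside; hence `x` is a continuous self-map of `[0,1]` fixing
`0` and `1`, onto by the intermediate value theorem. Every point of `[0,1]` is thus some `x t`, and
`W (W (x t)) = x (1 - (1 - t)) = x t`.
-/

open Set Filter Topology

def pickandsX (A : ℝ → ℝ) (t : ℝ) : ℝ := t + A t - 1

namespace IsPickands

variable {A : ℝ → ℝ}

lemma apply_eq_one_of_max_eq_one (hA : IsPickands A) {x : ℝ} (hx : x ∈ Icc (0 : ℝ) 1)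
    (hmax : max x (1 - x) = 1) : A x = 1 := by
  have := hA.1 x hx
  linarith

lemma apply_zero (hA : IsPickands A) : A 0 = 1 :=
  hA.apply_eq_one_of_max_eq_one (by norm_num) (by norm_num)

lemma apply_one (hA : IsPickands A) : A 1 = 1 :=
  hA.apply_eq_one_of_max_eq_one (by norm_num) (by norm_num)

lemma continuousWithinAt_of_max_eq_one (hA : IsPickands A) {x : ℝ} (hx : x ∈ Icc (0 : ℝ) 1)
    (hmax : max x (1 - x) = 1) : ContinuousWithinAt A (Icc 0 1) x := by
  have hlower : Tendsto (fun t : ℝ => max t (1 - t)) (𝓝[Icc 0 1] x) (𝓝 1) := by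
    have hcont : Continuous fun t : ℝ => max t (1 - t) := by fun_prop
    have hlim := (hcont.tendsto x).mono_left (nhdsWithin_le_nhds (s := Icc 0 1))
    rwa [hmax] at hlim
  rw [ContinuousWithinAt, hA.apply_eq_one_of_max_eq_one hx hmax]
  exact tendsto_of_tendsto_of_tendsto_of_le_of_le' hlower tendsto_const_nhds
    (eventually_nhdsWithin_of_forall fun t ht => (hA.1 t ht).1)
    (eventually_nhdsWithin_of_forall fun t ht => (hA.1 t ht).2)

lemma continuousOn (hA : IsPickands A) : ContinuousOn A (Icc 0 1) := by
  intro x hx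
  by_cases hint : x ∈ Ioo (0 : ℝ) 1
  · have hcont := hA.2.continuousOn_interior
    rw [interior_Icc] at hcont
    exact (hcont.continuousAt (isOpen_Ioo.mem_nhds hint)).continuousWithinAt
  · have hend : x = 0 ∨ x = 1 := by
      simp only [mem_Ioo, not_and_or, not_lt] at hint
      rcases hint with h | h
      · exact Or.inl (le_antisymm h hx.1)
      · exact Or.inr (le_antisymm hx.2 h)
    refine hA.continuousWithinAt_of_max_eq_one hx ?_
    rcases hend with rfl | rfl <;> norm_num

lemma mapsTo_pickandsX (hA : IsPickands A) : MapsTo (pickandsX A) (Icc 0 1) (Icc 0 1) := by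
  intro t ht
  have := hA.1 t ht
  constructor <;> simp only [pickandsX] <;>
    linarith [le_max_left t (1 - t), le_max_right t (1 - t), ht.2]

lemma surjOn_pickandsX (hA : IsPickands A) : SurjOn (pickandsX A) (Icc 0 1) (Icc 0 1) := by
  have hcont : ContinuousOn (pickandsX A) (Icc 0 1) :=
    (continuousOn_id.add hA.continuousOn).sub continuousOn_const
  have hivt := intermediate_value_Icc zero_le_one hcont
  rwa [pickandsX, pickandsX, hA.apply_zero, hA.apply_one, zero_add, sub_self,
    add_sub_cancel_right] at hivt

end IsPickands

lemma apply_pickandsX_eq_pickandsX_one_sub {A W : ℝ → ℝ}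
    (hsym : ∀ t ∈ Icc (0 : ℝ) 1, A t = A (1 - t))
    (hrel : ∀ t ∈ Icc (0 : ℝ) 1, W (t + A t - 1) = A t - t) {t : ℝ} (ht : t ∈ Icc (0 : ℝ) 1) :
    W (pickandsX A t) = pickandsX A (1 - t) := by
  rw [pickandsX, hrel t ht, pickandsX, ← hsym t ht]
  ring

theorem stmt8_general (A W : ℝ → ℝ) (hA : IsPickands A)
    (hsym : ∀ t ∈ Set.Icc (0:ℝ) 1, A t = A (1 - t))
    (hrel : ∀ t ∈ Set.Icc (0:ℝ) 1, W (t + A t - 1) = A t - t) :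
    Set.BijOn W (Set.Icc (0:ℝ) 1) (Set.Icc (0:ℝ) 1) ∧
    ∀ x ∈ Set.Icc (0:ℝ) 1, W (W x) = x := by
  have hflip : ∀ t ∈ Icc (0 : ℝ) 1, 1 - t ∈ Icc (0 : ℝ) 1 := fun t ht =>
    ⟨by linarith [ht.2], by linarith [ht.1]⟩
  have hW := fun t ht => apply_pickandsX_eq_pickandsX_one_sub hsym hrel (t := t) ht
  have hinv : ∀ x ∈ Icc (0 : ℝ) 1, W (W x) = x := by
    intro x hx
    obtain ⟨t, ht, rfl⟩ := hA.surjOn_pickandsX hx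
    rw [hW t ht, hW (1 - t) (hflip t ht), sub_sub_cancel]
  have hmaps : MapsTo W (Icc 0 1) (Icc 0 1) := by
    intro x hx
    obtain ⟨t, ht, rfl⟩ := hA.surjOn_pickandsX hx
    rw [hW t ht]
    exact hA.mapsTo_pickandsX (hflip t ht)
  exact ⟨InvOn.bijOn ⟨hinv, hinv⟩ hmaps hmaps, hinv⟩

/-- for a symmetric Pickands function A with A(t) > 1 - t on (0,1/2],
the transform W (defined by W(t + A t - 1) = A t - t) is an involution of [0,1]. -/
theorem stmt8 (A W : ℝ → ℝ) (hA : IsPickands A)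
    (hsym : ∀ t ∈ Set.Icc (0:ℝ) 1, A t = A (1 - t))
    (hgt : ∀ t ∈ Set.Ioc (0:ℝ) (1/2), 1 - t < A t)
    (hrel : ∀ t ∈ Set.Icc (0:ℝ) 1, W (t + A t - 1) = A t - t) :
    Set.BijOn W (Set.Icc (0:ℝ) 1) (Set.Icc (0:ℝ) 1) ∧
    ∀ x ∈ Set.Icc (0:ℝ) 1, W (W x) = x :=
  stmt8_general A W hA hsym hrel
end

section
/- Let W be the 2-monotone transform of a Pickands function A with A(t) > 1-t on (0,1/2], via x(t) = t + A(t) - 1 and W(x(t)) = A(t) - t. Then W has a unique fixed point x* = A(1/2) - 1/2, i.e., W(x*) = x* and W(x) = x implies x = x*. -/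
/-- W has a unique fixed point x* = A(1/2) - 1/2. -/
theorem stmt9 (A W : ℝ → ℝ) (hA : IsPickands A)
    (hgt : ∀ t ∈ Set.Ioc (0:ℝ) (1/2), 1 - t < A t)
    (hrel : ∀ t ∈ Set.Icc (0:ℝ) 1, W (t + A t - 1) = A t - t) :
    W (A (1/2) - 1/2) = A (1/2) - 1/2 ∧
    ∀ x ∈ Set.Icc (0:ℝ) 1, W x = x → x = A (1/2) - 1/2 := by
  obtain ⟨hb, hc⟩ := hA
  have h0 := hb 0 ⟨le_refl 0, zero_le_one⟩
  have h1 := hb 1 ⟨zero_le_one, le_refl 1⟩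
  have hA0 : A 0 = 1 := by
    have := h0.1; simp at this; linarith [h0.2]
  have hA1 : A 1 = 1 := by
    have := h1.1; simp at this; linarith [h1.2]
  -- A is 1-Lipschitz on [0,1]
  have key : ∀ t1 t2 : ℝ, 0 ≤ t1 → t1 ≤ t2 → t2 ≤ 1 →
      A t2 - A t1 ≤ t2 - t1 ∧ t1 - t2 ≤ A t2 - A t1 := by
    intro t1 t2 h01 h12 h21
    rcases eq_or_lt_of_le h12 with rfl | h12
    · simp
    have hb1 := hb t1 ⟨h01, le_trans (le_of_lt h12) h21⟩
    have hb2 := hb t2 ⟨le_trans h01 (le_of_lt h12), h21⟩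
    have ht1m : t1 ≤ A t1 := le_trans (le_max_left _ _) hb1.1
    have ht1m' : 1 - t1 ≤ A t1 := le_trans (le_max_right _ _) hb1.1
    have ht2m : t2 ≤ A t2 := le_trans (le_max_left _ _) hb2.1
    have ht2m' : 1 - t2 ≤ A t2 := le_trans (le_max_right _ _) hb2.1
    constructor
    · rcases eq_or_lt_of_le h21 with rfl | h21
      · linarith [hb1.2]
      · have hs := hc.slope_mono_adjacent ⟨h01, le_trans (le_of_lt h12) (le_of_lt h21)⟩
          ⟨zero_le_one, le_refl 1⟩ h12 h21
        rw [hA1] at hs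
        have hpos : (0:ℝ) < t2 - t1 := by linarith
        have hpos2 : (0:ℝ) < 1 - t2 := by linarith
        have hr : (1 - A t2) / (1 - t2) ≤ 1 := by
          rw [div_le_one hpos2]; linarith
        have := le_trans hs hr
        rw [div_le_one hpos] at this
        linarith
    · rcases eq_or_lt_of_le h01 with rfl | h01
      · rw [hA0]; linarith
      · have hs := hc.slope_mono_adjacent ⟨le_refl 0, zero_le_one⟩
          ⟨le_trans (le_of_lt h01) (le_of_lt h12), h21⟩ h01 h12
        rw [hA0] at hs
        have hpos : (0:ℝ) < t2 - t1 := by linarith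
        have hl : (-1 : ℝ) ≤ (A t1 - 1) / (t1 - 0) := by
          rw [sub_zero, le_div_iff₀ h01]; linarith
        have := le_trans hl hs
        rw [le_div_iff₀ hpos] at this
        linarith
  have hlip : LipschitzOnWith 1 A (Set.Icc (0:ℝ) 1) := by
    rw [lipschitzOnWith_iff_dist_le_mul]
    intro x hx y hy
    rw [Real.dist_eq, Real.dist_eq, NNReal.coe_one, one_mul]
    rcases le_total x y with h | h
    · obtain ⟨hu, hl⟩ := key x y hx.1 h hy.2
      have h1' : |x - y| = y - x := by
        rw [abs_sub_comm]; exact abs_of_nonneg (by linarith)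
      rw [h1', abs_le]; constructor <;> linarith
    · obtain ⟨hu, hl⟩ := key y x hy.1 h hx.2
      have h1' : |x - y| = x - y := abs_of_nonneg (by linarith)
      rw [h1', abs_le]; constructor <;> linarith
  have hcont : ContinuousOn (fun t : ℝ => t + A t - 1) (Set.Icc (0:ℝ) 1) :=
    (continuousOn_id.add hlip.continuousOn).sub continuousOn_const
  have hsurj : Set.Icc (0:ℝ) 1 ⊆ (fun t : ℝ => t + A t - 1) '' Set.Icc (0:ℝ) 1 := by
    have := intermediate_value_Icc (zero_le_one) hcont
    simpa [hA0, hA1] using this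
  have hhalf : (1/2 : ℝ) ∈ Set.Icc (0:ℝ) 1 := by norm_num
  have hfix : W (A (1/2) - 1/2) = A (1/2) - 1/2 := by
    have h := hrel (1/2) hhalf
    have he : (1/2 : ℝ) + A (1/2) - 1 = A (1/2) - 1/2 := by ring
    rw [he] at h
    exact h
  refine ⟨hfix, ?_⟩
  intro x hx hWx
  obtain ⟨t, ht, hft⟩ := hsurj hx
  have hft' : t + A t - 1 = x := hft
  have hrt := hrel t ht
  rw [hft', hWx] at hrt
  have ht2 : t = 1/2 := by linarith
  subst ht2
  linarith
end

section
/- Let A be a Pickands function arising from a 2-monotone W with inner pdf f via the Williamson transform (W(x) = ∫_x^1 (1 - x/r) f(r) dr) followed by the affine change t(x) = (1+x-W(x))/2, A(t(x)) = (1+x+W(x))/2. Then the Gini coefficient G = 4(1 - ∫_0^1 A(t) dt) satisfies G = 1 - 2∫_0^1 W(x) dx = 1 - E[X], where X is a random variable with density f. -/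
/-!
Write `W' = -G` with `G x = ∫_x^1 f(r)/r dr ≥ 0`, so `t(x) = (1 + x - W x)/2` is increasing with
`t' = (1 + G)/2`. The change of variables `t = t(x)` turns `∫ A` into
`∫ (1 + G)(1 + x + W)/4`, and `(1 + G)(1 + x + W) = 2W + (x + x²/2 - (1+x)W - W²/2)'`,
so `∫ A = (3 + 2∫W)/4` by `W 0 = 1`, `W 1 = 0`. Since `G` is unbounded near `0`, both the
change of variables and the fundamental theorem of calculus are applied on `(0, 1)`, with
integrability of the (nonnegative) derivative coming for free. Finally `x (W + F)/2`, with
`F x = ∫_x^1 f`, is a primitive of `W - x f/2` vanishing at `0` and `1`, so `∫ W = E[X]/2`.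
-/

open MeasureTheory intervalIntegral Set Filter

theorem integral_eq_sub_of_hasDerivAt_of_nonneg {g g' : ℝ → ℝ} {a b : ℝ} (hab : a ≤ b)
    (hcont : ContinuousOn g (Icc a b)) (hderiv : ∀ x ∈ Ioo a b, HasDerivAt g (g' x) x)
    (hpos : ∀ x ∈ Ioo a b, 0 ≤ g' x) : ∫ x in a..b, g' x = g b - g a :=
  integral_eq_sub_of_hasDerivAt_of_le hab hcont hderiv <|
    (intervalIntegrable_iff_integrableOn_Ioc_of_le hab).2 <|
      integrableOn_deriv_of_nonneg hcont hderiv hpos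

theorem integral_eq_integral_deriv_mul_of_bijOn {φ φ' A : ℝ → ℝ} {a b c d : ℝ} (hab : a ≤ b)
    (hφ : BijOn φ (Icc a b) (Icc c d)) (ha : φ a = c) (hb : φ b = d)
    (hderiv : ∀ x ∈ Ioo a b, HasDerivAt φ (φ' x) x) (hpos : ∀ x ∈ Ioo a b, 0 ≤ φ' x) :
    ∫ t in c..d, A t = ∫ x in a..b, φ' x * A (φ x) := by
  have hcd : c ≤ d := nonempty_Icc.1 ⟨_, hφ.mapsTo (left_mem_Icc.2 hab)⟩
  have himage : φ '' Ioo a b = Ioo c d := by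
    rw [← Icc_sdiff_both, hφ.injOn.image_sdiff_subset (pair_subset (left_mem_Icc.2 hab)
      (right_mem_Icc.2 hab)), hφ.image_eq, image_pair, ha, hb, Icc_sdiff_both]
  rw [integral_of_le hcd, integral_of_le hab, integral_Ioc_eq_integral_Ioo,
    integral_Ioc_eq_integral_Ioo, ← himage, integral_image_eq_integral_abs_deriv_smul
      measurableSet_Ioo (fun x hx => (hderiv x hx).hasDerivWithinAt)
      (hφ.injOn.mono Ioo_subset_Icc_self)]
  refine setIntegral_congr_fun measurableSet_Ioo fun x hx => ?_
  rw [abs_of_nonneg (hpos x hx), smul_eq_mul]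

theorem hasDerivAt_integral_left_of_continuousOn {g : ℝ → ℝ} {a b x : ℝ}
    (hg : ContinuousOn g (Icc a b)) (hx : x ∈ Ioo a b) :
    HasDerivAt (fun y => ∫ r in y..b, g r) (-g x) x :=
  integral_hasDerivAt_left
    (hg.mono (uIcc_subset_Icc (Ioo_subset_Icc_self hx)
      (right_mem_Icc.2 (hx.1.trans hx.2).le))).intervalIntegrable
    ((hg.mono Ioo_subset_Icc_self).stronglyMeasurableAtFilter isOpen_Ioo x hx)
    (hg.continuousAt (Icc_mem_nhds hx.1 hx.2))

theorem hasDerivAt_integral_right_of_continuousOn {g : ℝ → ℝ} {a b x : ℝ}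
    (hg : ContinuousOn g (Icc a b)) (hx : x ∈ Ioo a b) :
    HasDerivAt (fun y => ∫ r in a..y, g r) (g x) x :=
  integral_hasDerivAt_right
    (hg.mono (uIcc_subset_Icc (left_mem_Icc.2 (hx.1.trans hx.2).le)
      (Ioo_subset_Icc_self hx))).intervalIntegrable
    ((hg.mono Ioo_subset_Icc_self).stronglyMeasurableAtFilter isOpen_Ioo x hx)
    (hg.continuousAt (Icc_mem_nhds hx.1 hx.2))

noncomputable def williamson (f : ℝ → ℝ) (x : ℝ) : ℝ := ∫ r in x..1, (1 - x / r) * f r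

section Williamson

variable {f : ℝ → ℝ}

theorem williamson_zero : williamson f 0 = ∫ r in (0:ℝ)..1, f r := by
  simp [williamson]

theorem williamson_one : williamson f 1 = 0 := integral_same

theorem williamson_nonneg (hnonneg : ∀ x ∈ Icc (0:ℝ) 1, 0 ≤ f x) {x : ℝ}
    (hx : x ∈ Icc (0:ℝ) 1) : 0 ≤ williamson f x :=
  integral_nonneg hx.2 fun r hr =>
    mul_nonneg (sub_nonneg.2 (div_le_one_of_le₀ hr.1 (hx.1.trans hr.1)))
      (hnonneg r ⟨hx.1.trans hr.1, hr.2⟩)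

theorem intervalIntegral_div_nonneg (hnonneg : ∀ x ∈ Icc (0:ℝ) 1, 0 ≤ f x) {x : ℝ}
    (hx : x ∈ Icc (0:ℝ) 1) : 0 ≤ ∫ r in x..1, f r / r :=
  integral_nonneg hx.2 fun r hr =>
    div_nonneg (hnonneg r ⟨hx.1.trans hr.1, hr.2⟩) (hx.1.trans hr.1)

theorem williamson_eq_sub (hf : ContinuousOn f (Icc 0 1)) {x : ℝ} (hx : x ∈ Icc (0:ℝ) 1) :
    williamson f x = (∫ r in x..1, f r) - x * ∫ r in x..1, f r / r := by
  rcases hx.1.eq_or_lt with rfl | hx0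
  · simp [williamson]
  have hf' : ContinuousOn f (uIcc x 1) := hf.mono (by
    rw [uIcc_of_le hx.2]; exact Icc_subset_Icc_left hx.1)
  have hr0 : ∀ r ∈ uIcc x 1, r ≠ 0 := fun r hr => by
    rw [uIcc_of_le hx.2] at hr; exact (hx0.trans_le hr.1).ne'
  have hdiv : ContinuousOn (fun r => f r / r) (uIcc x 1) := hf'.div continuousOn_id hr0
  rw [williamson, ← intervalIntegral.integral_const_mul, ← integral_sub hf'.intervalIntegrable
    (hdiv.intervalIntegrable.const_mul x)]
  refine integral_congr fun r hr => ?_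
  field_simp [hr0 r hr]

theorem hasDerivAt_williamson (hf : ContinuousOn f (Icc 0 1)) {x : ℝ} (hx : x ∈ Ioo (0:ℝ) 1) :
    HasDerivAt (williamson f) (-∫ r in x..1, f r / r) x := by
  have hG : HasDerivAt (fun y => ∫ r in y..1, f r / r) (-(f x / x)) x :=
    hasDerivAt_integral_left_of_continuousOn
      ((hf.mono (Icc_subset_Icc_left (half_pos hx.1).le)).div continuousOn_id
        fun r hr => ((half_pos hx.1).trans_le hr.1).ne')
      ⟨half_lt_self hx.1, hx.2⟩
  refine (((hasDerivAt_integral_left_of_continuousOn hf hx).sub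
    ((hasDerivAt_id' x).mul hG)).congr_deriv ?_).congr_of_eventuallyEq ?_
  · field_simp [hx.1.ne']
    ring
  · filter_upwards [Icc_mem_nhds hx.1 hx.2] with y hy using williamson_eq_sub hf hy

theorem norm_posPart_mul_le {x r : ℝ} (hx : 0 ≤ x) (hr : 0 ≤ r) (c : ℝ) :
    ‖(1 - x / r)⁺ * c‖ ≤ ‖c‖ := by
  rw [norm_mul]
  refine mul_le_of_le_one_left (norm_nonneg c) ?_
  rw [Real.norm_of_nonneg (posPart_nonneg _)]
  exact sup_le (by linarith [div_nonneg hx hr]) zero_le_one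

theorem aestronglyMeasurable_posPart_mul (hf : ContinuousOn f (Icc 0 1)) (x : ℝ) :
    AEStronglyMeasurable (fun r => (1 - x / r)⁺ * f r) (volume.restrict (Ioc 0 1)) :=
  (by fun_prop : Measurable fun r : ℝ => (1 - x / r)⁺).aestronglyMeasurable.mul
    ((hf.mono Ioc_subset_Icc_self).aestronglyMeasurable measurableSet_Ioc)

-- Unlike `∫ r in x..1, f r / r`, the kernel `(1 - x / r)⁺` is bounded, so dominated convergence
-- gives continuity of `williamson f` up to `x = 0`.
theorem williamson_eq_integral_posPart (hf : ContinuousOn f (Icc 0 1)) {x : ℝ}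
    (hx : x ∈ Icc (0:ℝ) 1) : williamson f x = ∫ r in (0:ℝ)..1, (1 - x / r)⁺ * f r := by
  have hint : IntervalIntegrable (fun r => (1 - x / r)⁺ * f r) volume 0 1 := by
    rw [intervalIntegrable_iff_integrableOn_Ioc_of_le zero_le_one]
    refine Integrable.mono' (hf.integrableOn_Icc.mono_set Ioc_subset_Icc_self).norm
      (aestronglyMeasurable_posPart_mul hf x) ?_
    filter_upwards [ae_restrict_mem measurableSet_Ioc] with r hr using
      norm_posPart_mul_le hx.1 hr.1.le _
  have hx' : x ∈ uIcc (0:ℝ) 1 := by rwa [uIcc_of_le zero_le_one]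
  have h0x : ∫ r in (0:ℝ)..x, (1 - x / r)⁺ * f r = 0 := by
    rw [integral_congr_ae (g := fun _ => 0) (ae_of_all _ fun r hr => ?_),
      intervalIntegral.integral_zero]
    rw [uIoc_of_le hx.1] at hr
    rw [posPart_eq_zero.2 (sub_nonpos.2 ((one_le_div₀ hr.1).2 hr.2)), zero_mul]
  have hx1 : ∫ r in x..1, (1 - x / r)⁺ * f r = williamson f x := integral_congr fun r hr => by
    rw [uIcc_of_le hx.2] at hr
    rw [posPart_eq_self.2 (sub_nonneg.2 (div_le_one_of_le₀ hr.1 (hx.1.trans hr.1)))]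
  rw [← integral_add_adjacent_intervals (hint.mono_set (uIcc_subset_uIcc left_mem_uIcc hx'))
    (hint.mono_set (uIcc_subset_uIcc hx' right_mem_uIcc)), h0x, zero_add, hx1]

theorem continuousOn_williamson (hf : ContinuousOn f (Icc 0 1)) :
    ContinuousOn (williamson f) (Icc 0 1) := by
  have hf' : ContinuousOn f (uIcc 0 1) := by rwa [uIcc_of_le zero_le_one]
  have : ContinuousOn (fun x => ∫ r in (0:ℝ)..1, (1 - x / r)⁺ * f r) (Icc 0 1) := fun x _ =>
    continuousWithinAt_of_dominated_interval (bound := fun r => ‖f r‖)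
      (Eventually.of_forall fun y => by
        rw [uIoc_of_le zero_le_one]; exact aestronglyMeasurable_posPart_mul hf y)
      (eventually_nhdsWithin_of_forall fun y hy => ae_of_all _ fun r hr => by
        rw [uIoc_of_le zero_le_one] at hr
        exact norm_posPart_mul_le hy.1 hr.1.le _)
      hf'.intervalIntegrable.norm
      (ae_of_all _ fun r _ =>
        (by fun_prop : Continuous fun y => (1 - y / r)⁺ * f r).continuousWithinAt)
  exact this.congr fun x hx => williamson_eq_integral_posPart hf hx

theorem integral_williamson (hf : ContinuousOn f (Icc 0 1)) :
    ∫ x in (0:ℝ)..1, williamson f x = (∫ x in (0:ℝ)..1, x * f x) / 2 := by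
  have hW := continuousOn_williamson hf
  have hF : ContinuousOn (fun x => ∫ r in x..1, f r) (Icc 0 1) := by
    simpa only [uIcc_of_le zero_le_one] using continuousOn_primitive_interval_left
      (hf.integrableOn_Icc.mono_set (uIcc_of_le zero_le_one).subset)
  have hxf : ContinuousOn (fun x => x * f x / 2) (Icc 0 1) := (continuousOn_id.mul hf).div_const 2
  have hderiv : ∀ x ∈ Ioo (0:ℝ) 1, HasDerivAt
      (fun x => x * (williamson f x + ∫ r in x..1, f r) / 2) (williamson f x - x * f x / 2) x := by
    intro x hx
    refine (((hasDerivAt_id' x).mul ((hasDerivAt_williamson hf hx).add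
      (hasDerivAt_integral_left_of_continuousOn hf hx))).div_const 2).congr_deriv ?_
    rw [Pi.add_apply, williamson_eq_sub hf (Ioo_subset_Icc_self hx)]
    ring
  have hprim := integral_eq_sub_of_hasDerivAt_of_le zero_le_one (by fun_prop) hderiv
    ((hW.sub hxf).mono (uIcc_of_le zero_le_one).subset).intervalIntegrable
  rw [integral_sub (hW.mono (uIcc_of_le zero_le_one).subset).intervalIntegrable
    (hxf.mono (uIcc_of_le zero_le_one).subset).intervalIntegrable,
    intervalIntegral.integral_div] at hprim
  norm_num [williamson_one] at hprim
  linarith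

theorem integral_pickands_pullback (hf : ContinuousOn f (Icc 0 1))
    (hnonneg : ∀ x ∈ Icc (0:ℝ) 1, 0 ≤ f x) (hpdf : ∫ x in (0:ℝ)..1, f x = 1) :
    ∫ x in (0:ℝ)..1, (1 + ∫ r in x..1, f r / r) / 2 * ((1 + x + williamson f x) / 2) =
      (3 + 2 * ∫ x in (0:ℝ)..1, williamson f x) / 4 := by
  have hW := continuousOn_williamson hf
  have hP : ContinuousOn (fun x => ∫ r in (0:ℝ)..x, williamson f r) (Icc 0 1) := by
    simpa only [uIcc_of_le zero_le_one] using continuousOn_primitive_interval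
      (hW.integrableOn_Icc.mono_set (uIcc_of_le zero_le_one).subset)
  have hderiv : ∀ x ∈ Ioo (0:ℝ) 1, HasDerivAt
      (fun x => (x + x ^ 2 / 2 - (1 + x) * williamson f x - williamson f x ^ 2 / 2
        + 2 * ∫ r in (0:ℝ)..x, williamson f r) / 4)
      ((1 + ∫ r in x..1, f r / r) / 2 * ((1 + x + williamson f x) / 2)) x := by
    intro x hx
    have hWx := hasDerivAt_williamson hf hx
    refine ((((((hasDerivAt_id' x).add ((hasDerivAt_pow 2 x).div_const 2)).sub
      (((hasDerivAt_id' x).const_add 1).mul hWx)).sub ((hWx.pow 2).div_const 2)).add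
      ((hasDerivAt_integral_right_of_continuousOn hW hx).const_mul 2)).div_const 4).congr_deriv ?_
    ring
  have hpos : ∀ x ∈ Ioo (0:ℝ) 1,
      0 ≤ (1 + ∫ r in x..1, f r / r) / 2 * ((1 + x + williamson f x) / 2) := fun x hx =>
    have hG := intervalIntegral_div_nonneg hnonneg (Ioo_subset_Icc_self hx)
    have hWx := williamson_nonneg hnonneg (Ioo_subset_Icc_self hx)
    mul_nonneg (by linarith) (by linarith [hx.1])
  rw [integral_eq_sub_of_hasDerivAt_of_nonneg zero_le_one (by fun_prop) hderiv hpos]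
  simp only [williamson_one, williamson_zero, hpdf, integral_same]
  ring

theorem integral_pickands (hf : ContinuousOn f (Icc 0 1)) (hnonneg : ∀ x ∈ Icc (0:ℝ) 1, 0 ≤ f x)
    (hpdf : ∫ x in (0:ℝ)..1, f x = 1) {A : ℝ → ℝ}
    (hrel : ∀ x ∈ Icc (0:ℝ) 1, A ((1 + x - williamson f x) / 2) = (1 + x + williamson f x) / 2)
    (hbij : BijOn (fun x => (1 + x - williamson f x) / 2) (Icc 0 1) (Icc 0 1)) :
    ∫ t in (0:ℝ)..1, A t = (3 + 2 * ∫ x in (0:ℝ)..1, williamson f x) / 4 := by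
  have hderiv : ∀ x ∈ Ioo (0:ℝ) 1, HasDerivAt (fun x => (1 + x - williamson f x) / 2)
      ((1 + ∫ r in x..1, f r / r) / 2) x := fun x hx =>
    ((((hasDerivAt_id' x).const_add 1).sub (hasDerivAt_williamson hf hx)).div_const 2).congr_deriv
      (by ring)
  rw [integral_eq_integral_deriv_mul_of_bijOn zero_le_one hbij (by simp [williamson_zero, hpdf])
    (by simp [williamson_one]) hderiv fun x hx => by
      linarith [intervalIntegral_div_nonneg hnonneg (Ioo_subset_Icc_self hx)],
    ← integral_pickands_pullback hf hnonneg hpdf]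
  refine integral_congr fun x hx => ?_
  rw [uIcc_of_le zero_le_one] at hx
  simp only [hrel x hx]

end Williamson

/-- the Gini coefficient G = 4(1 - ∫A) equals 1 - 2∫W and 1 - E[X],
where X has density f, W is the Williamson transform of f, and A the resulting
Pickands function. -/
theorem stmt18 (f W A : ℝ → ℝ)
    (hcont : ContinuousOn f (Set.Icc (0:ℝ) 1))
    (hnonneg : ∀ x ∈ Set.Icc (0:ℝ) 1, 0 ≤ f x)
    (hpdf : (∫ x in (0:ℝ)..1, f x) = 1)
    (hW : ∀ x ∈ Set.Icc (0:ℝ) 1, W x = ∫ r in x..1, (1 - x / r) * f r)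
    (hrel : ∀ x ∈ Set.Icc (0:ℝ) 1, A ((1 + x - W x) / 2) = (1 + x + W x) / 2)
    (hbij : Set.BijOn (fun x => (1 + x - W x) / 2) (Set.Icc (0:ℝ) 1) (Set.Icc (0:ℝ) 1)) :
    4 * (1 - ∫ t in (0:ℝ)..1, A t) = 1 - 2 * (∫ x in (0:ℝ)..1, W x) ∧
    4 * (1 - ∫ t in (0:ℝ)..1, A t) = 1 - ∫ x in (0:ℝ)..1, x * f x := by
  have hWeq : EqOn W (williamson f) (Icc 0 1) := hW
  have hA : ∫ t in (0:ℝ)..1, A t = (3 + 2 * ∫ x in (0:ℝ)..1, williamson f x) / 4 :=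
    integral_pickands hcont hnonneg hpdf (fun x hx => hWeq hx ▸ hrel x hx)
      (hbij.congr fun x hx => by simp only [hWeq hx])
  have hint : ∫ x in (0:ℝ)..1, W x = ∫ x in (0:ℝ)..1, williamson f x :=
    integral_congr (hWeq.mono (uIcc_of_le zero_le_one).subset)
  rw [hA, hint, integral_williamson hcont]
  constructor <;> ring
end
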